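/- In any computation of a Floyd automaton on a finite input, the number of flush moves is at most the number of mark moves, and the number of push plus mark moves equals the length of the consumed input; hence every computation on an input of length n with ≐-acyclic matrix has length at most 2n. -/
import Mathlib


/-! # Preliminaries: precedence relations, Floyd automata, chains, supports,
operator (Floyd) grammars. -/

/-- The three operator precedence relations. -/
inductive PrecRel : Type
  | lt  -- ⋖ , yields precedence
  | eq  -- ≐ , equal in precedence
  | gt  -- ⋗ , takes precedence
deriving DecidableEq

/-- A (nondeterministic) Floyd automaton over a precedence alphabet `(T, M)`.
`none` plays the role of the delimiter `#`. -/
structure FloydAutomaton (T : Type*) (Q : Type*) where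
  /-- conflict-free operator precedence matrix over `T ∪ {#}` -/
  M : Option T → Option T → Option PrecRel
  /-- initial states -/
  init : Set Q
  /-- final states -/
  final : Set Q
  /-- push transition function -/
  push : Q → T → Set Q
  /-- flush transition function -/
  flush : Q → Q → Set Q

namespace FloydAutomaton

/-- A configuration: the bottom stack symbol `(#, base)` is represented by `base`,
the rest of the stack is a list (top = head) of triples (marked?, symbol, state),
and `input` is the remaining input (the trailing `#` is implicit). -/
structure Config (T : Type*) (Q : Type*) where
  base : Q
  stack : List (Bool × T × Q)
  input : List T

variable {T Q : Type*}

/-- Symbol on top of the stack (`none` = `#`). -/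
def Config.topSym (c : Config T Q) : Option T := c.stack.head?.map (fun s => s.2.1)

/-- State on top of the stack. -/
def Config.topState (c : Config T Q) : Q := ((c.stack.head?.map (fun s => s.2.2)).getD c.base)

/-- Number of marked symbols on the stack. -/
def Config.marked (c : Config T Q) : ℕ := c.stack.countP (fun s => s.1)

variable (A : FloydAutomaton T Q)

/-- One move of a Floyd automaton: push (top ≐ current), mark (top ⋖ current),
flush (top ⋗ current). -/
inductive Step : Config T Q → Config T Q → Prop
  | push {b : Q} {st : List (Bool × T × Q)} {w : List T} {q : Q} (a : T) :
      A.M (Config.topSym ⟨b, st, a :: w⟩) (some a) = some PrecRel.eq →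
      q ∈ A.push (Config.topState ⟨b, st, a :: w⟩) a →
      Step ⟨b, st, a :: w⟩ ⟨b, (false, a, q) :: st, w⟩
  | mark {b : Q} {st : List (Bool × T × Q)} {w : List T} {q : Q} (a : T) :
      A.M (Config.topSym ⟨b, st, a :: w⟩) (some a) = some PrecRel.lt →
      q ∈ A.push (Config.topState ⟨b, st, a :: w⟩) a →
      Step ⟨b, st, a :: w⟩ ⟨b, (true, a, q) :: st, w⟩
  | flushMid {b : Q} {pre : List (Bool × T × Q)} {x : T} {qm : Q}
      {s : Bool × T × Q} {rest : List (Bool × T × Q)} {w : List T} {q : Q} :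
      (∀ p ∈ pre, p.1 = false) →
      A.M (Config.topSym ⟨b, pre ++ (true, x, qm) :: s :: rest, w⟩) w.head? = some PrecRel.gt →
      q ∈ A.flush (Config.topState ⟨b, pre ++ (true, x, qm) :: s :: rest, w⟩) s.2.2 →
      Step ⟨b, pre ++ (true, x, qm) :: s :: rest, w⟩ ⟨b, (s.1, s.2.1, q) :: rest, w⟩
  | flushBot {b : Q} {pre : List (Bool × T × Q)} {x : T} {qm : Q} {w : List T} {q : Q} :
      (∀ p ∈ pre, p.1 = false) →
      A.M (Config.topSym ⟨b, pre ++ [(true, x, qm)], w⟩) w.head? = some PrecRel.gt →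
      q ∈ A.flush (Config.topState ⟨b, pre ++ [(true, x, qm)], w⟩) b →
      Step ⟨b, pre ++ [(true, x, qm)], w⟩ ⟨q, [], w⟩

/-- Acceptance of a finite word. -/
def Accepts (x : List T) : Prop :=
  ∃ qI ∈ A.init, ∃ qF ∈ A.final,
    Relation.ReflTransGen A.Step ⟨qI, [], x⟩ ⟨qF, [], []⟩

/-- The language recognized by a Floyd automaton. -/
def language : Set (List T) := { x | A.Accepts x }

/-- A Floyd automaton is deterministic iff it has one initial state and all
transition functions yield at most one state. -/
def Deterministic : Prop :=
  (∃ q, A.init = {q}) ∧ (∀ q a, (A.push q a).Subsingleton) ∧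
    (∀ q p, (A.flush q p).Subsingleton)

/-- States of the powerset determinization: a lookback symbol together with a set
of pairs of states (`none` in the second component is `⊥`). -/
abbrev DetState (T : Type*) (Q : Type*) := Option T × Set (Q × Option Q)

/-- Push transition of the determinization. -/
def detPushF (s : DetState T Q) (a : T) : DetState T Q :=
  (some a, { ht | ∃ q p, (q, p) ∈ s.2 ∧ ht.1 ∈ A.push q a ∧
      ((A.M s.1 (some a) = some PrecRel.lt ∧ ht.2 = some q) ∨
       (A.M s.1 (some a) = some PrecRel.eq ∧ ht.2 = p)) })

/-- Flush transition of the determinization. -/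
def detFlushF (s₁ s₂ : DetState T Q) : DetState T Q :=
  (s₂.1, { hp | ∃ r q, (r, some q) ∈ s₁.2 ∧ (q, hp.2) ∈ s₂.2 ∧ hp.1 ∈ A.flush r q })

/-- The powerset determinization of a Floyd automaton. -/
def det : FloydAutomaton T (DetState T Q) where
  M := A.M
  init := {(none, { p | p.2 = none ∧ p.1 ∈ A.init })}
  final := { s | s.1 = none ∧ ∃ q ∈ A.final, (q, none) ∈ s.2 }
  push := fun s a => {A.detPushF s a}
  flush := fun s₁ s₂ => {A.detFlushF s₁ s₂}

end FloydAutomaton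

section Chains

variable {T : Type*}

mutual
/-- `ChainB M a₀ y b` : the word `y` is the body of a (simple or composed) chain
`⌈a₀⌉ y ⌊b⌋` over the precedence alphabet `(T, M)`. -/
inductive ChainB (M : Option T → Option T → Option PrecRel) :
    Option T → List T → Option T → Prop
  | head0 {a₀ b : Option T} {a₁ : T} {y : List T} :
      M a₀ b ≠ none →
      M a₀ (some a₁) = some PrecRel.lt →
      ChainT M a₁ y b →
      ChainB M a₀ (a₁ :: y) b
  | head {a₀ b : Option T} {a₁ : T} {x₀ y : List T} :
      M a₀ b ≠ none →
      M a₀ (some a₁) = some PrecRel.lt →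
      ChainB M a₀ x₀ (some a₁) →
      ChainT M a₁ y b →
      ChainB M a₀ (x₀ ++ a₁ :: y) b

/-- Auxiliary: tail of a chain body, after a skeleton symbol `a`. -/
inductive ChainT (M : Option T → Option T → Option PrecRel) :
    T → List T → Option T → Prop
  | last0 {a : T} {b : Option T} :
      M (some a) b = some PrecRel.gt →
      ChainT M a [] b
  | last {a : T} {xn : List T} {b : Option T} :
      ChainB M (some a) xn b →
      M (some a) b = some PrecRel.gt →
      ChainT M a xn b
  | cons0 {a a' : T} {y : List T} {b : Option T} :
      M (some a) (some a') = some PrecRel.eq →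
      ChainT M a' y b →
      ChainT M a (a' :: y) b
  | cons {a a' : T} {x y : List T} {b : Option T} :
      M (some a) (some a') = some PrecRel.eq →
      ChainB M (some a) x (some a') →
      ChainT M a' y b →
      ChainT M a (x ++ a' :: y) b
end

/-- `SimpleBody M a₀ l b` : `l` is the body `a₁ … aₙ` of a simple chain
`⌈a₀⌉ a₁ … aₙ ⌊b⌋`, i.e. `a₀ ⋖ a₁ ≐ … ≐ aₙ ⋗ b` with `M a₀ b` defined. -/
def SimpleBody (M : Option T → Option T → Option PrecRel)
    (a₀ : Option T) (l : List T) (b : Option T) : Prop :=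
  (l ≠ []) ∧ M a₀ b ≠ none ∧
  (∀ h : l ≠ [], M a₀ (some (l.head h)) = some PrecRel.lt ∧
      M (some (l.getLast h)) b = some PrecRel.gt) ∧
  List.Chain' (fun x y => M (some x) (some y) = some PrecRel.eq) l

/-- `≐`-acyclicity of a precedence matrix. -/
def EqAcyclic (M : Option T → Option T → Option PrecRel) : Prop :=
  ∀ x : Option T, ¬ Relation.TransGen (fun u v => M u v = some PrecRel.eq) x x

variable {Q : Type*}

mutual
/-- `Supp A q y q'` : the automaton `A` has a support labelled by the chain body `y`
leading from state `q` to state `q'`, ending with a flush labelled by the state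
reached after the first filler. -/
inductive Supp (A : FloydAutomaton T Q) : Q → List T → Q → Prop
  | head0 {q₀ q₁ qf : Q} {a₁ : T} {y : List T} :
      q₁ ∈ A.push q₀ a₁ →
      SuppT A q₀ q₁ y qf →
      Supp A q₀ (a₁ :: y) qf
  | head {q₀ q₀' q₁ qf : Q} {a₁ : T} {x₀ y : List T} :
      Supp A q₀ x₀ q₀' →
      q₁ ∈ A.push q₀' a₁ →
      SuppT A q₀' q₁ y qf →
      Supp A q₀ (x₀ ++ a₁ :: y) qf

/-- Auxiliary: the tail of a support; the first argument after `A` is the label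
of the final flush. -/
inductive SuppT (A : FloydAutomaton T Q) : Q → Q → List T → Q → Prop
  | last0 {q₀' qn qf : Q} :
      qf ∈ A.flush qn q₀' →
      SuppT A q₀' qn [] qf
  | last {q₀' qn q' qf : Q} {xn : List T} :
      Supp A qn xn q' →
      qf ∈ A.flush q' q₀' →
      SuppT A q₀' qn xn qf
  | cons0 {q₀' qi q'' qf : Q} {a : T} {y : List T} :
      q'' ∈ A.push qi a →
      SuppT A q₀' q'' y qf →
      SuppT A q₀' qi (a :: y) qf
  | cons {q₀' qi q' q'' qf : Q} {a : T} {x y : List T} :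
      Supp A qi x q' →
      q'' ∈ A.push q' a →
      SuppT A q₀' q'' y qf →
      SuppT A q₀' qi (x ++ a :: y) qf
end

end Chains

section Grammar

variable {T : Type*}

open Symbol in
/-- A symbol is a nonterminal. -/
def IsNT {N : Type*} : Symbol T N → Prop
  | Symbol.nonterminal _ => True
  | Symbol.terminal _ => False

/-- A string over `Σ ∪ N` has no two adjacent nonterminals. -/
def NoAdjNT {N : Type*} (l : List (Symbol T N)) : Prop :=
  List.Chain' (fun x y => ¬(IsNT x ∧ IsNT y)) l

/-- An operator grammar: no right-hand side contains two adjacent nonterminals. -/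
def OperatorGrammar (g : ContextFreeGrammar T) : Prop :=
  ∀ r ∈ g.rules, NoAdjNT r.output

/-- The equal-in-precedence relation `a ≐ b` of a grammar. -/
def GEq (g : ContextFreeGrammar T) (a b : T) : Prop :=
  ∃ r ∈ g.rules, ∃ α mid β,
    r.output = α ++ Symbol.terminal a :: (mid ++ Symbol.terminal b :: β) ∧
    (mid = [] ∨ ∃ B, mid = [Symbol.nonterminal B])

/-- The left terminal set: `a ∈ 𝓛(A)` iff `A ⇒* B a α` with `B ∈ N ∪ {ε}`. -/
def LTerm (g : ContextFreeGrammar T) (A : g.NT) (a : T) : Prop :=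
  ∃ pre α, g.Derives [Symbol.nonterminal A] (pre ++ Symbol.terminal a :: α) ∧
    (pre = [] ∨ ∃ B, pre = [Symbol.nonterminal B])

/-- The right terminal set: `a ∈ 𝓡(A)` iff `A ⇒* α a B` with `B ∈ N ∪ {ε}`. -/
def RTerm (g : ContextFreeGrammar T) (A : g.NT) (a : T) : Prop :=
  ∃ α post, g.Derives [Symbol.nonterminal A] (α ++ Symbol.terminal a :: post) ∧
    (post = [] ∨ ∃ B, post = [Symbol.nonterminal B])

/-- The yields-precedence relation `a ⋖ b` of a grammar. -/
def GLt (g : ContextFreeGrammar T) (a b : T) : Prop :=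
  ∃ r ∈ g.rules, ∃ α β D,
    r.output = α ++ Symbol.terminal a :: Symbol.nonterminal D :: β ∧ LTerm g D b

/-- The takes-precedence relation `a ⋗ b` of a grammar. -/
def GGt (g : ContextFreeGrammar T) (a b : T) : Prop :=
  ∃ r ∈ g.rules, ∃ α β D,
    r.output = α ++ Symbol.nonterminal D :: Symbol.terminal b :: β ∧ RTerm g D a

/-- Conflict-freeness: for each pair of terminals at most one precedence relation holds. -/
def ConflictFree (g : ContextFreeGrammar T) : Prop :=
  ∀ a b : T, ¬(GEq g a b ∧ GLt g a b) ∧ ¬(GEq g a b ∧ GGt g a b) ∧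
    ¬(GLt g a b ∧ GGt g a b)

/-- A Floyd (operator precedence) grammar. -/
def FloydGrammar (g : ContextFreeGrammar T) : Prop :=
  OperatorGrammar g ∧ ConflictFree g

end Grammar


namespace MoveCountsAux

open FloydAutomaton

variable {T Q : Type*} [DecidableEq T] {A : FloydAutomaton T Q}

lemma step_classify {c₁ c₂ : Config T Q} (h : A.Step c₁ c₂) :
    (c₂.input = c₁.input ∧ c₂.stack.length < c₁.stack.length ∧
      c₂.marked + 1 = c₁.marked) ∨
    (c₁.input.length = c₂.input.length + 1 ∧
      c₂.stack.length = c₁.stack.length + 1 ∧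
      ((c₂.stack.head?.map Prod.fst = some true ∧ c₂.marked = c₁.marked + 1) ∨
       (c₂.stack.head?.map Prod.fst = some false ∧ c₂.marked = c₁.marked))) := by
  cases h with
  | push a h1 h2 => right; simp [Config.marked]
  | mark a h1 h2 => right; simp [Config.marked]
  | @flushMid b pre xx qm s rest w q hpre h1 h2 =>
      left
      have hp0 : pre.countP (fun s => s.1) = 0 :=
        List.countP_eq_zero.mpr (by intro p hp; simp [hpre p hp])
      refine ⟨rfl, ?_, ?_⟩
      · simp; omega
      · simp [Config.marked, List.countP_append, List.countP_cons, hp0]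
  | @flushBot b pre xx qm w q hpre h1 h2 =>
      left
      have hp0 : pre.countP (fun s => s.1) = 0 :=
        List.countP_eq_zero.mpr (by intro p hp; simp [hpre p hp])
      refine ⟨rfl, ?_, ?_⟩
      · simp
      · simp [Config.marked, List.countP_append, List.countP_cons, hp0]

/-- The three counting predicates from the statement. -/
def Pflush (p : Config T Q × Config T Q) : Bool := decide (p.2.input = p.1.input)
def Pmark (p : Config T Q × Config T Q) : Bool :=
  decide (p.2.stack.head?.map Prod.fst = some true ∧
    p.2.stack.length = p.1.stack.length + 1)
def Pgrow (p : Config T Q × Config T Q) : Bool :=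
  decide (p.2.stack.length = p.1.stack.length + 1)

lemma chain_counts : ∀ (l : List (Config T Q)) (c : Config T Q),
    List.Chain' A.Step (c :: l) →
    ∃ d, (c :: l).getLast? = some d ∧
      c.marked + ((c :: l).zip l).countP Pmark
        = d.marked + ((c :: l).zip l).countP Pflush ∧
      c.input.length = d.input.length + ((c :: l).zip l).countP Pgrow ∧
      ((c :: l).zip l).countP Pgrow + ((c :: l).zip l).countP Pflush = l.length := by
  intro l
  induction l with
  | nil => intro c _; exact ⟨c, by simp⟩
  | cons e l' ih =>
      intro c hchain
      have hstep : A.Step c e := (List.isChain_cons_cons.mp hchain).1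
      obtain ⟨d, hd, h1, h2, h3⟩ := ih e (List.isChain_cons_cons.mp hchain).2
      refine ⟨d, by simpa using hd, ?_⟩
      have hz : ((c :: e :: l').zip (e :: l')) = (c, e) :: ((e :: l').zip l') := rfl
      rw [hz]
      rcases step_classify hstep with ⟨hi, hl, hm⟩ | ⟨hi, hl, hcase⟩
      · have pf : Pflush (c, e) = true := by simp [Pflush, hi]
        have pm : Pmark (c, e) = false := by simp [Pmark]; omega
        have pg : Pgrow (c, e) = false := by simp [Pgrow]; omega
        have : e.input.length = c.input.length := by rw [hi]
        simp [List.countP_cons, pf, pm, pg]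
        omega
      · have pf : Pflush (c, e) = false := by
          simp only [Pflush, decide_eq_false_iff_not]
          intro h; rw [h] at hi; omega
        have pg : Pgrow (c, e) = true := by simp [Pgrow, hl]
        rcases hcase with ⟨hh, hm⟩ | ⟨hh, hm⟩
        · have pm : Pmark (c, e) = true := by simp [Pmark, hh, hl]
          simp [List.countP_cons, pf, pm, pg]
          omega
        · have pm : Pmark (c, e) = false := by simp [Pmark, hh]
          simp [List.countP_cons, pf, pm, pg]
          omega

end MoveCountsAux

open FloydAutomaton in
/-- in any computation from the initial stack, the number of flush
moves (which leave the input unchanged) is at most the number of mark moves, the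
number of push-or-mark moves equals the length of the consumed input, and hence
(with a `≐`-acyclic matrix) a computation on input of length `n` has at most
`2 n` moves. -/
theorem move_counts {T Q : Type*} [DecidableEq T] (A : FloydAutomaton T Q)
    (l : List (Config T Q)) (qI : Q) (x : List T)
    (hchain : List.Chain' A.Step l)
    (hhead : l.head? = some ⟨qI, [], x⟩) :
    ((l.zip l.tail).countP (fun p => decide (p.2.input = p.1.input)) ≤
      (l.zip l.tail).countP (fun p =>
        decide (p.2.stack.head?.map Prod.fst = some true ∧
          p.2.stack.length = p.1.stack.length + 1))) ∧
    ((l.zip l.tail).countP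
        (fun p => decide (p.2.stack.length = p.1.stack.length + 1)) =
      x.length - ((l.getLast?.map (fun c => c.input.length)).getD x.length)) ∧
    (EqAcyclic A.M → l.length ≤ 2 * x.length + 1) := by
  open MoveCountsAux in
  match l, hhead with
  | c :: rest, hhead => ?_
  have hc : c = ⟨qI, [], x⟩ := by simpa using hhead
  subst hc
  obtain ⟨d, hd, h1, h2, h3⟩ := chain_counts rest _ hchain
  set c : Config T Q := ⟨qI, [], x⟩
  have hmc : c.marked = 0 := by simp [Config.marked, c]
  have hxc : c.input.length = x.length := rfl
  have htail : (c :: rest).tail = rest := rfl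
  rw [htail]
  have hmono : ((c :: rest).zip rest).countP Pmark ≤
      ((c :: rest).zip rest).countP Pgrow := by
    apply List.countP_mono_left
    intro p _ hp
    simp only [Pmark, decide_eq_true_eq] at hp
    simp [Pgrow, hp.2]
  refine ⟨?_, ?_, ?_⟩
  · show ((c :: rest).zip rest).countP Pflush ≤ ((c :: rest).zip rest).countP Pmark
    omega
  · show ((c :: rest).zip rest).countP Pgrow = _
    rw [hd]
    simp only [Option.map_some, Option.getD_some]
    omega
  · intro _
    have : rest.length = ((c :: rest).zip rest).countP Pgrow +
        ((c :: rest).zip rest).countP Pflush := h3.symm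
    simp only [List.length_cons]
    omega
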